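/- arXiv:1809.09345 — 5 statements merged into one kernel-verified Lean document; each statement's English description precedes it below -/
import Mathlib

section
/- Let G be a graph, let F be obtained from G by adding, for each vertex v of G, a new pendant vertex v' adjacent only to v. Then every maximum cut of F is a bisection, i.e., if (A, B) is a cut of F maximizing the number of edges with one endpoint in each side, then |A| = |B|. -/
/-- The size of the cut `(A, Aᶜ)`: the number of edges with one endpoint in `A`
and the other outside `A`, counted via ordered pairs `(p.1, p.2)` with
`p.1 ∈ A`, `p.2 ∉ A` (each crossing edge is counted exactly once this way). -/
noncomputable def cutSize {V : Type*} (G : SimpleGraph V) (A : Set V) : ℕ :=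
  Nat.card {p : V × V // G.Adj p.1 p.2 ∧ p.1 ∈ A ∧ p.2 ∉ A}

/-- The graph obtained from `G` by adding a pendant vertex `inr v` adjacent only to
`inl v`, for every vertex `v` of `G`. -/
def pendantGraph {V : Type*} (G : SimpleGraph V) : SimpleGraph (V ⊕ V) where
  Adj a b := match a, b with
    | Sum.inl u, Sum.inl v => G.Adj u v
    | Sum.inl u, Sum.inr v => u = v
    | Sum.inr u, Sum.inl v => u = v
    | Sum.inr _, Sum.inr _ => False
  symm := by
    refine ⟨?_⟩
    rintro (u | u) (v | v) h <;> simp_all <;> exact h.symm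
  loopless := by
    refine ⟨?_⟩
    rintro (u | u) h <;> simp_all

/-!
In a maximum cut every pendant edge `vv'` crosses: if `v'` lay on the same side as its only
neighbour `v`, moving `v'` to the other side would gain that edge and lose none. So exactly one
of `v, v'` lies in `A` for each `v`, and the swap `v ↔ v'` maps `A` bijectively onto `Aᶜ`.
-/

namespace SimpleGraph

variable {V : Type*} (H : SimpleGraph V)

theorem cutSize_eq_ncard (A : Set V) :
    cutSize H A = {p : V × V | H.Adj p.1 p.2 ∧ p.1 ∈ A ∧ p.2 ∉ A}.ncard :=
  Nat.card_coe_set_eq _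

def IsMaxCut (A : Set V) : Prop :=
  ∀ B : Set V, cutSize H B ≤ cutSize H A

theorem cutSize_compl (A : Set V) : cutSize H Aᶜ = cutSize H A :=
  Nat.card_congr <| (Equiv.prodComm V V).subtypeEquiv fun p => by
    simp only [Equiv.prodComm_apply, Prod.fst_swap, Prod.snd_swap, Set.mem_compl_iff, not_not,
      H.adj_comm p.1 p.2]
    tauto

variable {H}

theorem IsMaxCut.compl {A : Set V} (hA : H.IsMaxCut A) : H.IsMaxCut Aᶜ := fun B => by
  rw [cutSize_compl]; exact hA B

theorem cutSize_diff_singleton_of_leaf [Finite V] {A : Set V} {x y : V}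
    (hxy : ∀ z, H.Adj x z ↔ z = y) (hx : x ∈ A) (hy : y ∈ A) :
    cutSize H (A \ {x}) = cutSize H A + 1 := by
  have hyx : y ≠ x := ((hxy y).2 rfl).ne'
  have hcross : {p : V × V | H.Adj p.1 p.2 ∧ p.1 ∈ A \ {x} ∧ p.2 ∉ A \ {x}} =
      insert (y, x) {p | H.Adj p.1 p.2 ∧ p.1 ∈ A ∧ p.2 ∉ A} := by
    ext ⟨a, b⟩
    have hb := hxy b
    have ha := hxy a
    rw [H.adj_comm] at ha
    grind
  rw [cutSize_eq_ncard, cutSize_eq_ncard, hcross,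
    Set.ncard_insert_of_notMem (fun h => h.2.2 hx) (Set.toFinite _)]

theorem IsMaxCut.notMem_of_leaf_mem [Finite V] {A : Set V} (hA : H.IsMaxCut A) {x y : V}
    (hxy : ∀ z, H.Adj x z ↔ z = y) (hx : x ∈ A) : y ∉ A := fun hy => by
  have := hA (A \ {x})
  rw [cutSize_diff_singleton_of_leaf hxy hx hy] at this
  omega

theorem IsMaxCut.leaf_mem_iff [Finite V] {A : Set V} (hA : H.IsMaxCut A) {x y : V}
    (hxy : ∀ z, H.Adj x z ↔ z = y) : x ∈ A ↔ y ∉ A :=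
  ⟨hA.notMem_of_leaf_mem hxy,
    fun hy => by_contra fun hx => hA.compl.notMem_of_leaf_mem hxy hx hy⟩

end SimpleGraph

open SimpleGraph

theorem pendantGraph_adj_inr {V : Type*} (G : SimpleGraph V) (v : V) (z : V ⊕ V) :
    (pendantGraph G).Adj (.inr v) z ↔ z = .inl v := by
  rcases z with w | w
  · exact eq_comm.trans Sum.inl.inj_iff.symm
  · simp [pendantGraph]

theorem maxcut_of_pendant_is_bisection {V : Type*} [Fintype V]
    (G : SimpleGraph V) (A : Set (V ⊕ V))
    (hmax : ∀ B : Set (V ⊕ V), cutSize (pendantGraph G) B ≤ cutSize (pendantGraph G) A) :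
    Nat.card A = Nat.card (Aᶜ : Set (V ⊕ V)) := by
  have hA : (pendantGraph G).IsMaxCut A := hmax
  have hside (v : V) : Sum.inr v ∈ A ↔ Sum.inl v ∉ A :=
    hA.leaf_mem_iff (pendantGraph_adj_inr G v)
  have hcompl : Aᶜ = Equiv.sumComm V V '' A := by
    ext (v | v) <;> rw [Set.mem_image_equiv] <;> simp only [Set.mem_compl_iff,
      Equiv.sumComm_symm, Equiv.sumComm_apply, Sum.swap_inl, Sum.swap_inr, hside, not_not]
  rw [hcompl]
  exact Nat.card_congr ((Equiv.sumComm V V).image A)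
end

section
/- Let C9 be the cycle on 9 vertices v1,...,v9 with three distinguished vertices x1 = v2, x2 = v5, x3 = v8 (pairwise at distance 3 on the cycle). For any cut (A, B) of C9, the cut contains at most 8 edges; moreover there exists a cut of size exactly 8 in which at least one xi lies in A and at least one xi lies in B, and conversely in every cut of size 8 not all of x1, x2, x3 lie on the same side of the partition. -/
/-- The cycle on 9 vertices, with vertex set `ZMod 9`. -/
def C9 : SimpleGraph (ZMod 9) := SimpleGraph.fromRel (fun i j => j = i + 1)

open Finset

section Arcs

variable {n : ℕ} (A : Set (ZMod n)) [DecidablePred (· ∈ A)]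

def arcCrossings (a : ZMod n) (k : ℕ) : ℕ :=
  #{j ∈ range k | ¬(a + ((j : ℕ) : ZMod n) ∈ A ↔ a + ((j : ℕ) : ZMod n) + 1 ∈ A)}

lemma arcCrossings_le (a : ZMod n) (k : ℕ) : arcCrossings A a k ≤ k :=
  (card_filter_le _ _).trans (card_range k).le

lemma arcCrossings_add (a : ZMod n) (k m : ℕ) :
    arcCrossings A a (k + m) = arcCrossings A a k + arcCrossings A (a + k) m := by
  simp only [arcCrossings, card_filter, sum_range_add, Nat.cast_add, add_assoc]

lemma even_arcCrossings_iff (a : ZMod n) (k : ℕ) :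
    Even (arcCrossings A a k) ↔ (a ∈ A ↔ a + k ∈ A) := by
  induction k with
  | zero => simp [arcCrossings]
  | succ k ih =>
    have hstep : arcCrossings A (a + k) 1 = if a + k ∈ A ↔ a + k + 1 ∈ A then 0 else 1 := by
      simp [arcCrossings, range_one, filter_singleton, apply_ite card]
    rw [arcCrossings_add, hstep, Nat.cast_succ, ← add_assoc]
    split_ifs with h <;> simp only [add_zero, Nat.even_add_one, ih] <;> tauto

lemma arcCrossings_lt_of_odd {a : ZMod n} {k : ℕ} (hk : Odd k) (h : a ∈ A ↔ a + k ∈ A) :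
    arcCrossings A a k < k :=
  (arcCrossings_le A a k).lt_of_ne fun heq ↦
    Nat.not_even_iff_odd.2 hk (heq ▸ (even_arcCrossings_iff A a k).2 h)

lemma card_crossing_eq_arcCrossings [NeZero n] (a : ZMod n) :
    #{i | ¬(i ∈ A ↔ i + 1 ∈ A)} = arcCrossings A a n := by
  rw [arcCrossings, eq_comm]
  refine card_nbij' (fun j ↦ a + j) (fun i ↦ (i - a).val) ?_ ?_ ?_ ?_
  · intro j hj
    simp only [coe_filter, mem_range, Set.mem_ofPred_eq, mem_univ, true_and] at hj ⊢
    exact hj.2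
  · intro i hi
    simp only [coe_filter, mem_range, Set.mem_ofPred_eq, mem_univ, true_and,
      ZMod.natCast_zmod_val, add_sub_cancel] at hi ⊢
    exact ⟨ZMod.val_lt _, hi⟩
  · intro j hj
    simp only [coe_filter, mem_range, Set.mem_ofPred_eq] at hj
    simp [ZMod.val_natCast, Nat.mod_eq_of_lt hj.1]
  · intro i _; simp

-- For `n ≤ 2` the `n` pairs `{i, i + 1}` are not `n` distinct edges.
lemma cutSize_cycle_eq_card [NeZero n] (h2 : (2 : ZMod n) ≠ 0) :
    cutSize (SimpleGraph.fromRel fun i j : ZMod n ↦ j = i + 1) A =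
      #{i | ¬(i ∈ A ↔ i + 1 ∈ A)} := by
  classical
  have h1 : ∀ x : ZMod n, x + 1 ≠ x := fun x h ↦ h2 (by linear_combination (2 : ZMod n) * h)
  have h11 : ∀ x : ZMod n, x + 1 + 1 ≠ x := fun x h ↦ h2 (by linear_combination h)
  rw [cutSize, Nat.card_eq_fintype_card, Fintype.card_subtype, eq_comm]
  refine card_nbij' (fun x ↦ if x ∈ A then (x, x + 1) else (x + 1, x))
    (fun p ↦ if p.2 = p.1 + 1 then p.1 else p.2) ?_ ?_ ?_ ?_
  · intro x hx
    simp only [coe_filter, mem_univ, true_and, Set.mem_ofPred_eq, SimpleGraph.fromRel_adj] at hx ⊢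
    split_ifs <;> grind
  · intro p hp
    simp only [coe_filter, mem_univ, true_and, Set.mem_ofPred_eq, SimpleGraph.fromRel_adj] at hp ⊢
    split_ifs <;> grind
  · intro x _
    simp only
    split_ifs <;> grind
  · intro p hp
    simp only [coe_filter, mem_univ, true_and, Set.mem_ofPred_eq, SimpleGraph.fromRel_adj] at hp ⊢
    split_ifs <;> grind

end Arcs

lemma cutSize_C9_eq_arcCrossings (A : Set (ZMod 9)) [DecidablePred (· ∈ A)] (a : ZMod 9) :
    cutSize C9 A = arcCrossings A a 9 :=
  (cutSize_cycle_eq_card A (by decide)).trans (card_crossing_eq_arcCrossings A a)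

lemma cutSize_C9_le (A : Set (ZMod 9)) : cutSize C9 A ≤ 8 := by
  classical
  have hend : (0 : ZMod 9) + (9 : ℕ) = 0 := by decide
  rw [cutSize_C9_eq_arcCrossings A 0]
  exact Nat.le_of_lt_succ (arcCrossings_lt_of_odd A (by decide) (by rw [hend]))

lemma cutSize_C9_le_six (A : Set (ZMod 9)) (h14 : 1 ∈ A ↔ 4 ∈ A) (h47 : 4 ∈ A ↔ 7 ∈ A) :
    cutSize C9 A ≤ 6 := by
  classical
  have arc_le : ∀ a b : ZMod 9, a + (3 : ℕ) = b → (a ∈ A ↔ b ∈ A) → arcCrossings A a 3 ≤ 2 :=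
    fun a b hab h ↦ Nat.le_of_lt_succ (arcCrossings_lt_of_odd A (by decide) (hab ▸ h))
  have hsplit : arcCrossings A 1 9 =
      arcCrossings A 1 3 + arcCrossings A 4 3 + arcCrossings A 7 3 :=
    (arcCrossings_add A 1 (3 + 3) 3).trans (by rw [arcCrossings_add]; norm_num)
  have h1 := arc_le 1 4 (by decide) h14
  have h4 := arc_le 4 7 (by decide) h47
  have h7 := arc_le 7 1 (by decide) (h14.trans h47).symm
  rw [cutSize_C9_eq_arcCrossings A 1]
  omega

theorem c9_cut_bound_and_distinguished :
    (∀ A : Set (ZMod 9), cutSize C9 A ≤ 8) ∧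
    (∃ A : Set (ZMod 9), cutSize C9 A = 8 ∧
      (∃ x ∈ ({1, 4, 7} : Set (ZMod 9)), x ∈ A) ∧
      (∃ x ∈ ({1, 4, 7} : Set (ZMod 9)), x ∉ A)) ∧
    (∀ A : Set (ZMod 9), cutSize C9 A = 8 →
      ¬(((1 : ZMod 9) ∈ A ∧ (4 : ZMod 9) ∈ A ∧ (7 : ZMod 9) ∈ A) ∨
        ((1 : ZMod 9) ∉ A ∧ (4 : ZMod 9) ∉ A ∧ (7 : ZMod 9) ∉ A))) := by
  refine ⟨cutSize_C9_le,
    ⟨{i | i.val % 2 = 0}, ?_, ⟨4, by simp, by decide⟩, ⟨1, by simp, by decide⟩⟩, ?_⟩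
  · rw [cutSize_C9_eq_arcCrossings _ 0]
    decide
  · intro A h8 hside
    have := cutSize_C9_le_six A (by tauto) (by tauto)
    omega
end

section
/- Assume every instance of Positive Not-All-Equal 3-SAT in which every clause has 2 or 3 (all positive) variables: the formula Φ with clause sets of size 2 and 3 is NAE-satisfiable if and only if the graph G(Φ) has a cut of size at least m2 + 8·m3, where G(Φ) is built by taking one vertex xi per variable, one edge xi xj per 2-clause (ui, uj), and for each 3-clause (ui, uj, uk) a 9-cycle through xi, xj, xk with six new vertices so that xi, xj, xk are pairwise at distance 3 on that cycle; m2 and m3 are the numbers of 2-clauses and 3-clauses respectively. -/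
variable {U : Type*} [DecidableEq U]

/-- Vertex type of the NAE-gadget graph: one vertex per variable, plus six new
vertices for every 3-clause. -/
abbrev NAEVert (threes : Finset (U × U × U)) : Type _ :=
  U ⊕ ({t : U × U × U // t ∈ threes} × Fin 6)

/-- The `i`-th vertex (cyclically) of the 9-cycle gadget of the 3-clause `t`:
the variable vertices `x_i, x_j, x_k` sit at positions `1, 4, 7`
(pairwise at distance 3), the six new vertices at the remaining positions. -/
def gadgetVert {threes : Finset (U × U × U)} (t : {t : U × U × U // t ∈ threes})
    (i : Fin 9) : NAEVert threes :=
  if i = 1 then Sum.inl t.1.1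
  else if i = 4 then Sum.inl t.1.2.1
  else if i = 7 then Sum.inl t.1.2.2
  else if i = 0 then Sum.inr (t, 0)
  else if i = 2 then Sum.inr (t, 1)
  else if i = 3 then Sum.inr (t, 2)
  else if i = 5 then Sum.inr (t, 3)
  else if i = 6 then Sum.inr (t, 4)
  else Sum.inr (t, 5)

/-- The graph `G(Φ)`: an edge `x_i x_j` for every 2-clause `(u_i, u_j)`, and a
9-cycle through `x_i, x_j, x_k` (with six new vertices) for every 3-clause. -/
def naeGraph (twos : Finset (U × U)) (threes : Finset (U × U × U)) :
    SimpleGraph (NAEVert threes) :=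
  SimpleGraph.fromRel (fun a b =>
    (∃ p ∈ twos, a = Sum.inl p.1 ∧ b = Sum.inl p.2) ∨
    (∃ t : {t : U × U × U // t ∈ threes}, ∃ i : Fin 9,
      a = gadgetVert t i ∧ b = gadgetVert t (i + 1)))

/-!
A cut is read off as a colouring `c` of the vertices. Since distinct clauses give distinct edges,
its size is the number of 2-clause edges with differently coloured ends plus, for each 3-clause,
the number of colour changes around its 9-cycle. A closed walk changes colour an even number of
times, so a 9-cycle contributes at most 8, and at most 6 when `x_i, x_j, x_k` get the same colour
(each of the three arcs of length 3 between them then changes colour 0 or 2 times). Hence a cut of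
size `m₂ + 8 m₃` makes the colours of the variable vertices an NAE-assignment. Conversely, an
NAE-assignment, with each new vertex coloured opposite to its neighbouring variable vertex, cuts
every 2-clause edge and 8 edges of every 9-cycle.
-/

open Finset

section Cut

variable {V E : Type*}

def orientBy (c : V → Bool) (x : V × V) : V × V :=
  if c x.1 then x else x.swap

lemma mk_orientBy (c : V → Bool) (x : V × V) :
    s((orientBy c x).1, (orientBy c x).2) = s(x.1, x.2) := by
  obtain ⟨a, b⟩ := x
  unfold orientBy
  split_ifs
  · rfl
  · exact Sym2.eq_swap

variable (ends : E → V × V) (c : V → Bool)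

/-- `cutSize` counts each crossing edge once, oriented from the `true` side to the `false` side. -/
def crossingPair (e : {e // c (ends e).1 ≠ c (ends e).2}) :
    {p : V × V // (SimpleGraph.fromRel fun a b => ∃ e, ends e = (a, b)).Adj p.1 p.2 ∧
      p.1 ∈ {v | c v} ∧ p.2 ∉ {v | c v}} :=
  ⟨orientBy c (ends e), by
    obtain ⟨e, he⟩ := e
    rcases hab : ends e with ⟨a, b⟩
    rw [hab] at he
    have hne : a ≠ b := fun h => he (h ▸ rfl)
    unfold orientBy
    cases ha : c a
    · have hb : c b = true := by simpa [ha] using he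
      exact ⟨⟨hne.symm, Or.inr ⟨e, hab⟩⟩, hb, by simp [ha]⟩
    · have hb : c b = false := by simpa [ha] using he
      exact ⟨⟨hne, Or.inl ⟨e, hab⟩⟩, ha, by simp [hb]⟩⟩

lemma crossingPair_surjective : Function.Surjective (crossingPair ends c) := by
  rintro ⟨⟨a, b⟩, ⟨-, ⟨e, he⟩ | ⟨e, he⟩⟩, ha, hb⟩ <;>
    simp only [Set.mem_ofPred_eq, Bool.not_eq_true] at ha hb
  · exact ⟨⟨e, by simp [he, ha, hb]⟩, by simp [crossingPair, orientBy, he, ha]⟩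
  · exact ⟨⟨e, by simp [he, ha, hb]⟩, by simp [crossingPair, orientBy, he, hb]⟩

lemma crossingPair_injective (h : Function.Injective fun e => s((ends e).1, (ends e).2)) :
    Function.Injective (crossingPair ends c) := by
  intro e e' hee'
  have := congrArg (fun p => s(p.1.1, p.1.2)) hee'
  simp only [crossingPair, mk_orientBy] at this
  exact Subtype.ext (h this)

variable [Fintype E]

theorem cutSize_fromRel_le :
    cutSize (SimpleGraph.fromRel fun a b => ∃ e, ends e = (a, b)) {v | c v} ≤
      #{e | c (ends e).1 ≠ c (ends e).2} := by
  rw [← Fintype.card_subtype, ← Nat.card_eq_fintype_card]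
  exact Nat.card_le_card_of_surjective _ (crossingPair_surjective ends c)

theorem cutSize_fromRel_eq (h : Function.Injective fun e => s((ends e).1, (ends e).2)) :
    cutSize (SimpleGraph.fromRel fun a b => ∃ e, ends e = (a, b)) {v | c v} =
      #{e | c (ends e).1 ≠ c (ends e).2} := by
  rw [← Fintype.card_subtype, ← Nat.card_eq_fintype_card]
  exact (Nat.card_eq_of_bijective _
    ⟨crossingPair_injective ends c h, crossingPair_surjective ends c⟩).symm

end Cut

section Gadget

omit [DecidableEq U]

variable {twos : Finset (U × U)} {threes : Finset (U × U × U)}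

abbrev NAEEdge (twos : Finset (U × U)) (threes : Finset (U × U × U)) : Type _ :=
  {p // p ∈ twos} ⊕ ({t // t ∈ threes} × Fin 9)

def naeEnds : NAEEdge twos threes → NAEVert threes × NAEVert threes
  | .inl p => (.inl p.1.1, .inl p.1.2)
  | .inr (t, i) => (gadgetVert t i, gadgetVert t (i + 1))

lemma naeGraph_eq_fromRel : naeGraph twos threes =
    SimpleGraph.fromRel fun a b => ∃ e : NAEEdge twos threes, naeEnds e = (a, b) := by
  ext a b
  simp only [naeGraph, SimpleGraph.fromRel_adj, Sum.exists, Prod.exists, naeEnds, Prod.mk.injEq,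
    Subtype.exists, exists_prop, eq_comm (a := a), eq_comm (a := b)]

def newPos : Fin 9 → Option (Fin 6) :=
  ![some 0, none, some 1, some 2, none, some 3, some 4, none, some 5]

lemma getRight?_gadgetVert (t : {t // t ∈ threes}) (i : Fin 9) :
    (gadgetVert t i).getRight? = (newPos i).map (t, ·) := by
  fin_cases i <;> rfl

lemma newPos_edge_ne_none (i : Fin 9) {T : Type*} (t : T) :
    s((newPos i).map (t, ·), (newPos (i + 1)).map (t, ·)) ≠ s(none, none) := by
  fin_cases i <;> simp [newPos]

lemma newPos_edge_injective {T : Type*} {t t' : T} {i j : Fin 9}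
    (h : s((newPos i).map (t, ·), (newPos (i + 1)).map (t, ·)) =
      s((newPos j).map (t', ·), (newPos (j + 1)).map (t', ·))) : t = t' ∧ i = j := by
  fin_cases i <;> fin_cases j <;> simp [newPos] at h ⊢ <;> tauto

lemma naeEnds_sym2_injective (h2' : ∀ p ∈ twos, (p.2, p.1) ∉ twos) :
    Function.Injective fun e : NAEEdge twos threes => s((naeEnds e).1, (naeEnds e).2) := by
  -- Forgetting the variable vertices still separates the edges: every cycle edge has a new
  -- vertex, and new vertices are tagged with their clause.
  rintro (p | ⟨t, i⟩) (q | ⟨t', j⟩) h <;>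
    have hnew := congrArg (Sym2.map Sum.getRight?) h <;>
    simp only [naeEnds, Sym2.map_mk, Sum.getRight?_inl, getRight?_gadgetVert] at h hnew
  · rcases Sym2.eq_iff.1 h with ⟨h1, h2⟩ | ⟨h1, h2⟩
    · exact congrArg Sum.inl (Subtype.ext (Prod.ext (Sum.inl_injective h1) (Sum.inl_injective h2)))
    · refine absurd ?_ (h2' p p.2)
      rw [Sum.inl_injective h1, Sum.inl_injective h2]
      exact q.2
  · exact absurd hnew.symm (newPos_edge_ne_none j t')
  · exact absurd hnew (newPos_edge_ne_none i t)
  · obtain ⟨rfl, rfl⟩ := newPos_edge_injective hnew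
    rfl

theorem cutSize_naeGraph_eq (h2' : ∀ p ∈ twos, (p.2, p.1) ∉ twos) (c : NAEVert threes → Bool) :
    cutSize (naeGraph twos threes) {v | c v} =
      #{e : NAEEdge twos threes | c (naeEnds e).1 ≠ c (naeEnds e).2} := by
  rw [naeGraph_eq_fromRel]
  exact cutSize_fromRel_eq naeEnds c (naeEnds_sym2_injective h2')

theorem cutSize_naeGraph_le (c : NAEVert threes → Bool) :
    cutSize (naeGraph twos threes) {v | c v} ≤
      #{e : NAEEdge twos threes | c (naeEnds e).1 ≠ c (naeEnds e).2} := by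
  rw [naeGraph_eq_fromRel]
  exact cutSize_fromRel_le naeEnds c

def cycleCut (χ : Fin 9 → Bool) : ℕ := #{i | χ i ≠ χ (i + 1)}

lemma card_crossing_naeEdge (c : NAEVert threes → Bool) :
    #{e : NAEEdge twos threes | c (naeEnds e).1 ≠ c (naeEnds e).2} =
      #{p : {p // p ∈ twos} | c (.inl p.1.1) ≠ c (.inl p.1.2)} +
        ∑ t : {t // t ∈ threes}, cycleCut (c ∘ gadgetVert t) := by
  rw [card_filter, Fintype.sum_sum_type, Fintype.sum_prod_type]
  simp only [naeEnds, cycleCut, card_filter, Function.comp_apply]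
  rfl

set_option maxRecDepth 10000 in
lemma cycleCut_le_eight : ∀ χ : Fin 9 → Bool, cycleCut χ ≤ 8 := by
  decide

set_option maxRecDepth 10000 in
lemma cycleCut_le_six : ∀ χ : Fin 9 → Bool, χ 1 = χ 4 ∧ χ 4 = χ 7 → cycleCut χ ≤ 6 := by
  decide

set_option maxRecDepth 10000 in
lemma cycleCut_pattern : ∀ a b c : Bool, ¬(a = b ∧ b = c) →
    cycleCut ![!a, a, !a, !b, b, !b, !c, c, !c] = 8 := by
  decide

/-- Extends a truth assignment to the new vertices: each one gets the opposite value of the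
variable vertex it is adjacent to on its cycle. -/
def extendAssignment (f : U → Bool) : NAEVert threes → Bool
  | .inl u => f u
  | .inr (t, k) => !f (if k < 2 then t.1.1 else if k < 4 then t.1.2.1 else t.1.2.2)

lemma extendAssignment_comp_gadgetVert (f : U → Bool) (t : {t // t ∈ threes}) :
    extendAssignment f ∘ gadgetVert t =
      ![!f t.1.1, f t.1.1, !f t.1.1, !f t.1.2.1, f t.1.2.1, !f t.1.2.1,
        !f t.1.2.2, f t.1.2.2, !f t.1.2.2] := by
  funext i
  fin_cases i <;> rfl

lemma nae_of_le_card_crossing (c : NAEVert threes → Bool)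
    (h : twos.card + 8 * threes.card ≤
      #{p : {p // p ∈ twos} | c (.inl p.1.1) ≠ c (.inl p.1.2)} +
        ∑ t : {t // t ∈ threes}, cycleCut (c ∘ gadgetVert t)) :
    (∀ p ∈ twos, c (.inl p.1) ≠ c (.inl p.2)) ∧
      ∀ t ∈ threes, ¬(c (.inl t.1) = c (.inl t.2.1) ∧ c (.inl t.2.1) = c (.inl t.2.2)) := by
  have h2le := card_filter_le (univ : Finset {p // p ∈ twos})
    fun p => c (.inl p.1.1) ≠ c (.inl p.1.2)
  have h3le := sum_le_sum fun (t : {t // t ∈ threes}) (_ : t ∈ univ) =>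
    cycleCut_le_eight (c ∘ gadgetVert t)
  simp only [sum_const, smul_eq_mul, card_univ, Fintype.card_coe] at h2le h3le
  have h2all := (card_filter_eq_iff (s := univ)
    (p := fun p : {p // p ∈ twos} => c (.inl p.1.1) ≠ c (.inl p.1.2))).1
    (by rw [card_univ, Fintype.card_coe]; omega)
  have h3all := (sum_eq_sum_iff_of_le fun t _ => cycleCut_le_eight (c ∘ gadgetVert t)).1
    (by rw [sum_const, smul_eq_mul, card_univ, Fintype.card_coe]; omega)
  refine ⟨fun p hp => h2all ⟨p, hp⟩ (mem_univ _), fun t ht hall => ?_⟩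
  have := cycleCut_le_six (c ∘ gadgetVert ⟨t, ht⟩) hall
  have := h3all ⟨t, ht⟩ (mem_univ _)
  omega

end Gadget

theorem posNAE3SAT_iff_maxcut_general
    (twos : Finset (U × U)) (threes : Finset (U × U × U))
    (h2' : ∀ p ∈ twos, (p.2, p.1) ∉ twos) :
    (∃ f : U → Bool,
        (∀ p ∈ twos, f p.1 ≠ f p.2) ∧
        (∀ t ∈ threes, ¬(f t.1 = f t.2.1 ∧ f t.2.1 = f t.2.2))) ↔
      (∃ A : Set (NAEVert threes),
        twos.card + 8 * threes.card ≤ cutSize (naeGraph twos threes) A) := by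
  classical
  constructor
  · rintro ⟨f, hf2, hf3⟩
    let c : NAEVert threes → Bool := extendAssignment f
    refine ⟨{v | c v}, le_of_eq ?_⟩
    have h2cut : #{p : {p // p ∈ twos} | c (.inl p.1.1) ≠ c (.inl p.1.2)} = twos.card := by
      rw [filter_true_of_mem fun p _ => hf2 p.1 p.2, card_univ, Fintype.card_coe]
    have h3cut (t : {t // t ∈ threes}) : cycleCut (c ∘ gadgetVert t) = 8 := by
      rw [extendAssignment_comp_gadgetVert]
      exact cycleCut_pattern _ _ _ (hf3 t.1 t.2)
    rw [cutSize_naeGraph_eq h2', card_crossing_naeEdge, h2cut]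
    simp only [h3cut, sum_const, card_univ, Fintype.card_coe, smul_eq_mul, mul_comm]
  · rintro ⟨A, hA⟩
    let c : NAEVert threes → Bool := fun v => decide (v ∈ A)
    have hA' : A = {v | c v} := by ext; simp [c]
    rw [hA'] at hA
    have hcross := hA.trans (cutSize_naeGraph_le c)
    rw [card_crossing_naeEdge] at hcross
    obtain ⟨h2, h3⟩ := nae_of_le_card_crossing c hcross
    exact ⟨fun u => c (.inl u), h2, h3⟩

theorem posNAE3SAT_iff_maxcut
    (twos : Finset (U × U)) (threes : Finset (U × U × U))
    (h2 : ∀ p ∈ twos, p.1 ≠ p.2)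
    (h2' : ∀ p ∈ twos, (p.2, p.1) ∉ twos)
    (h3 : ∀ t ∈ threes, t.1 ≠ t.2.1 ∧ t.1 ≠ t.2.2 ∧ t.2.1 ≠ t.2.2) :
    (∃ f : U → Bool,
        (∀ p ∈ twos, f p.1 ≠ f p.2) ∧
        (∀ t ∈ threes, ¬(f t.1 = f t.2.1 ∧ f t.2.1 = f t.2.2))) ↔
      (∃ A : Set (NAEVert threes),
        twos.card + 8 * threes.card ≤ cutSize (naeGraph twos threes) A) :=
  posNAE3SAT_iff_maxcut_general twos threes h2'
end

section
/- Let G be the complete bipartite-like grid graph with vertex set X ∪ Y, X = {x1,...,xn}, Y = {y1,...,yn}, where every xi is adjacent to every yj (and X, Y are independent sets). Let C4 have consecutive vertices a, b, c, d. Suppose edge lists are imposed as follows: edge xi yi may only be mapped to ab or cd; for each edge (i,j) in a fixed graph F on [n], edge xi yj may only be mapped to cb, cd, or ad; all other edges xi yj are unconstrained. Then there exists a list-respecting homomorphism h : G → C4 with at least 2k vertices mapped into {a, b} if and only if F has an independent set of size at least k. -/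
/-!
Call a vertex marked if `h` sends it into `{a, b}`. The list `{ab, cd}` of the edge `xᵢyᵢ` marks
`xᵢ` and `yᵢ` together, so `h` marks exactly `2 |I|` vertices, where `I` is the set of indices `i`
with `xᵢ` marked. None of the lists `{cb, cd, ad}` of the edges `xᵢyⱼ`, `ij ∈ E(F)`, contains the
edge `ab`, so `I` is independent in `F`. Conversely, an independent set `I` gives the homomorphism
sending `xᵢ ↦ a`, `yᵢ ↦ b` for `i ∈ I` and `xᵢ ↦ c`, `yᵢ ↦ d` otherwise.
-/

/-- The 4-cycle `a–b–c–d–a`, with `a = 0`, `b = 1`, `c = 2`, `d = 3`. -/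
def C4 : SimpleGraph (ZMod 4) := SimpleGraph.fromRel (fun i j => j = i + 1)

open Finset

theorem Nat.card_subtype_sum_self {ι : Type*} [Finite ι] {p : ι ⊕ ι → Prop}
    (hp : ∀ i, p (.inl i) ↔ p (.inr i)) :
    Nat.card {v // p v} = 2 * Nat.card {i // p (.inl i)} := by
  rw [Nat.card_congr Equiv.subtypeSum, Nat.card_sum, two_mul,
    Nat.card_congr (Equiv.subtypeEquivRight fun i => (hp i).symm)]

namespace C4

def IsAB (x : ZMod 4) : Prop := x = 0 ∨ x = 1

instance : DecidablePred IsAB := fun x => inferInstanceAs (Decidable (x = 0 ∨ x = 1))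

/-- The list of the edges `xᵢyᵢ`. -/
def diagList : Set (Sym2 (ZMod 4)) := {s(0, 1), s(2, 3)}

/-- The list of the edges `xᵢyⱼ` with `ij ∈ E(F)`. -/
def edgeList : Set (Sym2 (ZMod 4)) := {s(2, 1), s(2, 3), s(0, 3)}

theorem isAB_iff_of_mem_diagList {x y : ZMod 4} (h : s(x, y) ∈ diagList) :
    IsAB x ↔ IsAB y := by
  rcases h with h | h <;> obtain ⟨rfl, rfl⟩ | ⟨rfl, rfl⟩ := Sym2.eq_iff.1 h <;> decide

theorem not_isAB_and_isAB_of_mem_edgeList {x y : ZMod 4} (h : s(x, y) ∈ edgeList) :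
    ¬ (IsAB x ∧ IsAB y) := by
  rcases h with h | h | h <;> obtain ⟨rfl, rfl⟩ | ⟨rfl, rfl⟩ := Sym2.eq_iff.1 h <;> decide

variable {ι : Type*}

theorem card_isAB_eq_two_mul [Finite ι] {h : ι ⊕ ι → ZMod 4}
    (hdiag : ∀ i, s(h (.inl i), h (.inr i)) ∈ diagList) :
    Nat.card {v // IsAB (h v)} = 2 * Nat.card {i // IsAB (h (.inl i))} :=
  Nat.card_subtype_sum_self fun i => isAB_iff_of_mem_diagList (hdiag i)

theorem exists_independent_of_mem_lists [Fintype ι] {F : SimpleGraph ι} {h : ι ⊕ ι → ZMod 4}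
    (hdiag : ∀ i, s(h (.inl i), h (.inr i)) ∈ diagList)
    (hF : ∀ i j, F.Adj i j → s(h (.inl i), h (.inr j)) ∈ edgeList) :
    ∃ I : Finset ι, Nat.card {v // IsAB (h v)} = 2 * #I ∧ ∀ i ∈ I, ∀ j ∈ I, ¬ F.Adj i j := by
  refine ⟨univ.filter fun i => IsAB (h (.inl i)), ?_, ?_⟩
  · rw [card_isAB_eq_two_mul hdiag, Nat.card_eq_fintype_card, Fintype.card_subtype]
  · intro i hi j hj hij
    simp only [mem_filter, mem_univ, true_and] at hi hj
    exact not_isAB_and_isAB_of_mem_edgeList (hF i j hij)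
      ⟨hi, (isAB_iff_of_mem_diagList (hdiag j)).1 hj⟩

variable [DecidableEq ι]

def ofFinset (I : Finset ι) : ι ⊕ ι → ZMod 4 :=
  Sum.elim (fun i => if i ∈ I then 0 else 2) (fun i => if i ∈ I then 1 else 3)

theorem adj_ofFinset (I : Finset ι) (i j : ι) :
    C4.Adj (ofFinset I (.inl i)) (ofFinset I (.inr j)) := by
  simp only [ofFinset, Sum.elim_inl, Sum.elim_inr, C4, SimpleGraph.fromRel_adj]
  split_ifs <;> decide

theorem ofFinset_mem_diagList (I : Finset ι) (i : ι) :
    s(ofFinset I (.inl i), ofFinset I (.inr i)) ∈ diagList := by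
  by_cases hi : i ∈ I <;> simp [ofFinset, diagList, hi]

theorem ofFinset_mem_edgeList {F : SimpleGraph ι} {I : Finset ι}
    (hI : ∀ i ∈ I, ∀ j ∈ I, ¬ F.Adj i j) {i j : ι} (hij : F.Adj i j) :
    s(ofFinset I (.inl i), ofFinset I (.inr j)) ∈ edgeList := by
  by_cases hi : i ∈ I <;> by_cases hj : j ∈ I
  · exact absurd hij (hI i hi j hj)
  all_goals simp [ofFinset, edgeList, hi, hj]

theorem card_isAB_ofFinset [Fintype ι] (I : Finset ι) :
    Nat.card {v // IsAB (ofFinset I v)} = 2 * #I := by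
  rw [card_isAB_eq_two_mul (ofFinset_mem_diagList I), ← Nat.card_eq_finsetCard]
  refine congrArg _ (Nat.card_congr (Equiv.subtypeEquivRight fun i => ?_))
  by_cases hi : i ∈ I <;> simp only [ofFinset, Sum.elim_inl, hi, if_true, if_false] <;> decide

end C4

/-- Vertices of the grid graph: `inl i` is `x_i ∈ X`, `inr j` is `y_j ∈ Y`;
every `x_i` is adjacent to every `y_j`. -/
theorem grid_list_hom_C4_iff_independent_set (n : ℕ) (F : SimpleGraph (Fin n)) (k : ℕ) :
    (∃ h : Fin n ⊕ Fin n → ZMod 4,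
        -- `h` is a homomorphism from the complete bipartite graph `K_{n,n}` to `C4`
        (∀ i j : Fin n, C4.Adj (h (Sum.inl i)) (h (Sum.inr j))) ∧
        -- the edge `x_i y_i` is mapped to `ab` or to `cd`
        (∀ i : Fin n, s(h (Sum.inl i), h (Sum.inr i)) = s((0 : ZMod 4), 1) ∨
          s(h (Sum.inl i), h (Sum.inr i)) = s((2 : ZMod 4), 3)) ∧
        -- for `(i,j) ∈ E(F)`, the edge `x_i y_j` is mapped to `cb`, `cd` or `ad`
        (∀ i j : Fin n, F.Adj i j →
          s(h (Sum.inl i), h (Sum.inr j)) = s((2 : ZMod 4), 1) ∨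
          s(h (Sum.inl i), h (Sum.inr j)) = s((2 : ZMod 4), 3) ∨
          s(h (Sum.inl i), h (Sum.inr j)) = s((0 : ZMod 4), 3)) ∧
        -- at least `2k` vertices are mapped into `{a, b}`
        2 * k ≤ Nat.card {v : Fin n ⊕ Fin n // h v = 0 ∨ h v = 1}) ↔
      (∃ I : Finset (Fin n), k ≤ I.card ∧ ∀ i ∈ I, ∀ j ∈ I, ¬ F.Adj i j) := by
  constructor
  · rintro ⟨h, -, hdiag, hF, hcard⟩
    obtain ⟨I, hI, hind⟩ := C4.exists_independent_of_mem_lists hdiag hF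
    exact ⟨I, Nat.le_of_mul_le_mul_left (hcard.trans_eq hI) two_pos, hind⟩
  · rintro ⟨I, hk, hind⟩
    refine ⟨C4.ofFinset I, C4.adj_ofFinset I, C4.ofFinset_mem_diagList I,
      fun i j => C4.ofFinset_mem_edgeList hind, ?_⟩
    exact (C4.card_isAB_ofFinset I).symm ▸ Nat.mul_le_mul_left 2 hk
end

section
/- Let H be the graph on vertices {a, b} with edge ab and a loop at b. In the gadget consisting of a path f – e – s (f adjacent only to e; e adjacent only to f and s), any locally surjective homomorphism h of a graph G containing this gadget (with s possibly having further neighbors, but e and f having no other neighbors) must satisfy h(f) = a, h(e) = b, and h(s) = b; consequently s must have at least one neighbor mapped to a. -/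
/-- The target graph `H`: vertices `a = false` and `b = true`, with the edge `ab`
and a loop at `b` (no loop at `a`): `x` is adjacent to `y` iff `x` or `y` is `b`. -/
def Hab : Bool → Bool → Prop := fun x y => x = true ∨ y = true

/-!
A vertex mapped to `b` must see both `a` and `b` among its neighbours, so a vertex of degree one
is mapped to `a`, and its neighbour to `b`. Then `e`, mapped to `b`, needs a neighbour mapped to
`b`, which cannot be `f`; so it is `s`, and `s` in turn needs a neighbour mapped to `a`.
-/

namespace Hab

variable {V : Type*} {G : SimpleGraph V} {h : V → Bool}
  (hls : ∀ v : V, h '' G.neighborSet v = {w : Bool | Hab (h v) w})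
include hls

theorem exists_adj_apply_eq {v : V} {b : Bool} (hb : Hab (h v) b) :
    ∃ u, G.Adj v u ∧ h u = b :=
  (hls v).ge hb

theorem apply_eq_true_of_adj {u v : V} (hv : h v = false) (huv : G.Adj v u) : h u = true := by
  have : h u ∈ {w : Bool | Hab (h v) w} := hls v ▸ Set.mem_image_of_mem h huv
  simpa [Hab, hv] using this

theorem apply_eq_false_of_neighborSet_eq_singleton {u v : V} (hv : G.neighborSet v = {u}) :
    h v = false := by
  by_contra hvb
  rw [Bool.not_eq_false] at hvb
  obtain ⟨x, hx, hxa⟩ := exists_adj_apply_eq hls (b := false) (Or.inl hvb)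
  obtain ⟨y, hy, hyb⟩ := exists_adj_apply_eq hls (b := true) (Or.inl hvb)
  have hx : x = u := by simpa [← SimpleGraph.mem_neighborSet, hv] using hx
  have hy : y = u := by simpa [← SimpleGraph.mem_neighborSet, hv] using hy
  subst hx hy
  exact Bool.false_ne_true (hxa.symm.trans hyb)

end Hab

theorem lsh_to_Hab_pendant_gadget_general {V : Type*} (G : SimpleGraph V) (h : V → Bool)
    (hls : ∀ v : V, h '' G.neighborSet v = {w : Bool | Hab (h v) w})
    (f e s : V)
    (hf : G.neighborSet f = {e}) (he : G.neighborSet e = {f, s}) :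
    h f = false ∧ h e = true ∧ h s = true ∧ ∃ u : V, G.Adj s u ∧ h u = false := by
  have hfa : h f = false := Hab.apply_eq_false_of_neighborSet_eq_singleton hls hf
  have heb : h e = true :=
    Hab.apply_eq_true_of_adj hls hfa (by simp [← SimpleGraph.mem_neighborSet, hf])
  have hsb : h s = true := by
    obtain ⟨u, hu, hub⟩ := Hab.exists_adj_apply_eq hls (b := true) (Or.inl heb)
    rw [← SimpleGraph.mem_neighborSet, he] at hu
    rcases hu with rfl | rfl
    · exact absurd (hfa.symm.trans hub) Bool.false_ne_true
    · exact hub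
  exact ⟨hfa, heb, hsb, Hab.exists_adj_apply_eq hls (Or.inl hsb)⟩

theorem lsh_to_Hab_pendant_gadget {V : Type*} (G : SimpleGraph V) (h : V → Bool)
    (hhom : ∀ u v : V, G.Adj u v → Hab (h u) (h v))
    (hls : ∀ v : V, h '' G.neighborSet v = {w : Bool | Hab (h v) w})
    (f e s : V) (hfs : f ≠ s)
    (hf : G.neighborSet f = {e}) (he : G.neighborSet e = {f, s}) :
    h f = false ∧ h e = true ∧ h s = true ∧ ∃ u : V, G.Adj s u ∧ h u = false :=
  lsh_to_Hab_pendant_gadget_general G h hls f e s hf he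
end
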